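/- Let H₀ be a skew-symmetric operator and let (𝒢₁, 𝒢₂, F) be a boundary system for H₀ with the standard symmetric and standard unitary forms. Then an operator H ⊆ H₀* is skew-self-adjoint if and only if there exists a unitary operator L : 𝒢₁ → 𝒢₂ such that D(H) = {x ∈ D(H₀*) : L F₁x = F₂x} (and Hx = H₀*x for x ∈ D(H)). -/

import Mathlib

/-!
Via `F`, the restrictions `H ⊆ H₀*` correspond to subsets of the boundary space
`𝒢₁ × 𝒢₂` with the indefinite form `⟪g.1, w.1⟫ - ⟪g.2, w.2⟫`. The boundary identity and
skew-symmetry of `H₀` force `F = 0` on `D(H₀)`, and identify `D(H*)` with the `x ∈ D(H₀*)` whose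
boundary value `F x` is form-orthogonal to `F(D(H))`. Hence `H = -H*` exactly when `F(D(H))` is
Lagrangian, i.e. equal to its own form-orthogonal complement. A Lagrangian subspace is the graph
of a unitary `𝒢₁ → 𝒢₂`: on it `‖g.1‖ = ‖g.2‖`, and it is closed, so each projection has closed
range with trivial orthogonal complement.
-/

open scoped InnerProductSpace

section Lagrangian

variable {𝕜 𝒢₁ 𝒢₂ : Type*} [RCLike 𝕜] [NormedAddCommGroup 𝒢₁] [InnerProductSpace 𝕜 𝒢₁]
  [NormedAddCommGroup 𝒢₂] [InnerProductSpace 𝕜 𝒢₂]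

variable (𝕜) in
def boundaryOrthogonal (S : Set (𝒢₁ × 𝒢₂)) : Submodule 𝕜 (𝒢₁ × 𝒢₂) where
  carrier := {g | ∀ w ∈ S, ⟪g.1, w.1⟫_𝕜 = ⟪g.2, w.2⟫_𝕜}
  add_mem' {a b} ha hb w hw := by
    simp only [Prod.fst_add, Prod.snd_add, inner_add_left, ha w hw, hb w hw]
  zero_mem' := by simp
  smul_mem' c a ha w hw := by
    simp only [Prod.smul_fst, Prod.smul_snd, inner_smul_left, ha w hw]

theorem mem_boundaryOrthogonal {S : Set (𝒢₁ × 𝒢₂)} {g : 𝒢₁ × 𝒢₂} :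
    g ∈ boundaryOrthogonal 𝕜 S ↔ ∀ w ∈ S, ⟪g.1, w.1⟫_𝕜 = ⟪g.2, w.2⟫_𝕜 :=
  Iff.rfl

theorem isClosed_boundaryOrthogonal (S : Set (𝒢₁ × 𝒢₂)) :
    IsClosed (boundaryOrthogonal 𝕜 S : Set (𝒢₁ × 𝒢₂)) := by
  have : (boundaryOrthogonal 𝕜 S : Set (𝒢₁ × 𝒢₂)) =
      ⋂ w ∈ S, {g | ⟪g.1, w.1⟫_𝕜 = ⟪g.2, w.2⟫_𝕜} := by
    ext g
    simp [mem_boundaryOrthogonal]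
  rw [this]
  exact isClosed_biInter fun w _ => isClosed_eq (by fun_prop) (by fun_prop)

variable (𝕜) in
theorem boundaryOrthogonal_univ : boundaryOrthogonal 𝕜 (Set.univ : Set (𝒢₁ × 𝒢₂)) = ⊥ := by
  refine (Submodule.eq_bot_iff _).2 fun g hg => ?_
  have h₁ : ⟪g.1, g.1⟫_𝕜 = 0 := by simpa using hg (g.1, 0) trivial
  have h₂ : ⟪g.2, g.2⟫_𝕜 = 0 := by simpa using (hg (0, g.2) trivial).symm
  exact Prod.ext (inner_self_eq_zero.1 h₁) (inner_self_eq_zero.1 h₂)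

variable (𝕜) in
def IsLagrangian (S : Set (𝒢₁ × 𝒢₂)) : Prop :=
  (boundaryOrthogonal 𝕜 S : Set (𝒢₁ × 𝒢₂)) = S

namespace IsLagrangian

variable {S : Set (𝒢₁ × 𝒢₂)}

theorem mem_boundaryOrthogonal_iff (hS : IsLagrangian 𝕜 S) {g : 𝒢₁ × 𝒢₂} :
    g ∈ boundaryOrthogonal 𝕜 S ↔ g ∈ S := by
  rw [← SetLike.mem_coe, hS]

theorem mem_iff (hS : IsLagrangian 𝕜 S) {g : 𝒢₁ × 𝒢₂} :
    g ∈ S ↔ ∀ w ∈ S, ⟪g.1, w.1⟫_𝕜 = ⟪g.2, w.2⟫_𝕜 :=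
  hS.mem_boundaryOrthogonal_iff.symm

theorem inner_eq (hS : IsLagrangian 𝕜 S) {g w : 𝒢₁ × 𝒢₂} (hg : g ∈ S) (hw : w ∈ S) :
    ⟪g.1, w.1⟫_𝕜 = ⟪g.2, w.2⟫_𝕜 :=
  hS.mem_iff.1 hg w hw

theorem norm_fst_eq (hS : IsLagrangian 𝕜 S) {g : 𝒢₁ × 𝒢₂} (hg : g ∈ S) : ‖g.1‖ = ‖g.2‖ := by
  have h := hS.inner_eq hg hg
  rw [inner_self_eq_norm_sq_to_K, inner_self_eq_norm_sq_to_K] at h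
  exact (sq_eq_sq₀ (norm_nonneg _) (norm_nonneg _)).1 (by exact_mod_cast h)

theorem swap (hS : IsLagrangian 𝕜 S) : IsLagrangian 𝕜 (Prod.swap ⁻¹' S) := by
  ext g
  rw [SetLike.mem_coe, mem_boundaryOrthogonal, Set.mem_preimage, hS.mem_iff]
  exact ⟨fun h w hw => (h w.swap (by simpa using hw)).symm, fun h w hw => (h w.swap hw).symm⟩

theorem exists_mem [CompleteSpace 𝒢₁] [CompleteSpace 𝒢₂] (hS : IsLagrangian 𝕜 S) (x : 𝒢₁) :
    ∃ y, (x, y) ∈ S := by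
  set W := boundaryOrthogonal 𝕜 S
  set K := W.map (LinearMap.fst 𝕜 𝒢₁ 𝒢₂)
  have hmem (w : W) : (w : 𝒢₁ × 𝒢₂) ∈ S := hS.mem_boundaryOrthogonal_iff.1 w.2
  -- for the sup norm on the product, `‖w‖ = ‖w.1‖` on `W`
  have hiso : Isometry fun w : W => (w : 𝒢₁ × 𝒢₂).1 :=
    AddMonoidHomClass.isometry_of_norm ((LinearMap.fst 𝕜 𝒢₁ 𝒢₂).comp W.subtype) fun w => by
      simp [Prod.norm_def, (hS.norm_fst_eq (hmem w)).symm]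
  have : CompleteSpace W := (isClosed_boundaryOrthogonal S).completeSpace_coe
  have : CompleteSpace K := by
    have hK : (K : Set 𝒢₁) = (fun w : W => (w : 𝒢₁ × 𝒢₂).1) '' Set.univ := by
      ext
      simp [K]
    refine IsComplete.completeSpace_coe ?_
    rw [hK, isComplete_image_iff hiso.isUniformInducing]
    exact isComplete_univ
  have hK : K = ⊤ := by
    rw [← Submodule.orthogonal_eq_bot_iff, Submodule.eq_bot_iff]
    intro u hu
    have hu0 : (u, (0 : 𝒢₂)) ∈ S := hS.mem_iff.2 fun w hw => by
      simpa using (Submodule.mem_orthogonal' K u).1 hu w.1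
        ⟨w, hS.mem_boundaryOrthogonal_iff.2 hw, rfl⟩
    exact inner_self_eq_zero.1 ((Submodule.mem_orthogonal' K u).1 hu u
      ⟨_, hS.mem_boundaryOrthogonal_iff.2 hu0, rfl⟩)
  obtain ⟨w, hw, rfl⟩ : x ∈ K := hK ▸ Submodule.mem_top
  exact ⟨w.2, hS.mem_boundaryOrthogonal_iff.1 hw⟩

theorem exists_linearIsometryEquiv [CompleteSpace 𝒢₁] [CompleteSpace 𝒢₂]
    (hS : IsLagrangian 𝕜 S) : ∃ L : 𝒢₁ ≃ₗᵢ[𝕜] 𝒢₂, ∀ g, g ∈ S ↔ L g.1 = g.2 := by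
  set W := boundaryOrthogonal 𝕜 S
  have hmem (w : W) : (w : 𝒢₁ × 𝒢₂) ∈ S := hS.mem_boundaryOrthogonal_iff.1 w.2
  have hbij : Function.Bijective ((LinearMap.fst 𝕜 𝒢₁ 𝒢₂).comp W.subtype) := by
    refine ⟨(injective_iff_map_eq_zero _).2 fun w hw => ?_, fun x => ?_⟩
    · have h₁ : (w : 𝒢₁ × 𝒢₂).1 = 0 := hw
      have h₂ : (w : 𝒢₁ × 𝒢₂).2 = 0 := by
        rw [← norm_eq_zero, ← hS.norm_fst_eq (hmem w), h₁, norm_zero]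
      exact Subtype.ext (Prod.ext h₁ h₂)
    · obtain ⟨y, hy⟩ := hS.exists_mem x
      exact ⟨⟨(x, y), hS.mem_boundaryOrthogonal_iff.2 hy⟩, rfl⟩
  set e := LinearEquiv.ofBijective _ hbij
  set L : 𝒢₁ →ₗ[𝕜] 𝒢₂ := (LinearMap.snd 𝕜 𝒢₁ 𝒢₂).comp (W.subtype.comp e.symm.toLinearMap)
  have hgraph (x : 𝒢₁) : (x, L x) ∈ S := by
    have hx : ((e.symm x : W) : 𝒢₁ × 𝒢₂).1 = x := e.apply_symm_apply x
    have h := hmem (e.symm x)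
    rwa [← Prod.mk.eta (p := ((e.symm x : W) : 𝒢₁ × 𝒢₂)), hx] at h
  have hunique (g : 𝒢₁ × 𝒢₂) (hg : g ∈ S) : L g.1 = g.2 := by
    have : e.symm g.1 = ⟨g, hS.mem_boundaryOrthogonal_iff.2 hg⟩ := e.symm_apply_eq.2 rfl
    simp [L, this]
  have hinner (x x' : 𝒢₁) : ⟪L x, L x'⟫_𝕜 = ⟪x, x'⟫_𝕜 :=
    (hS.inner_eq (hgraph x) (hgraph x')).symm
  have hsurj : Function.Surjective (L.isometryOfInner hinner) := fun y => by
    obtain ⟨x, hx⟩ := hS.swap.exists_mem y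
    exact ⟨x, hunique (x, y) hx⟩
  refine ⟨.ofSurjective _ hsurj, fun g => ⟨hunique g, fun h => ?_⟩⟩
  rw [← Prod.mk.eta (p := g), ← h]
  exact hgraph g.1

theorem mem_iff_mem_boundaryOrthogonal_image (hS : IsLagrangian 𝕜 S) {X : Type*}
    {F : X → 𝒢₁ × 𝒢₂} (hF : Function.Surjective F) {D : Set X} (hD : ∀ p, p ∈ D ↔ F p ∈ S)
    (p : X) : p ∈ D ↔ F p ∈ boundaryOrthogonal 𝕜 (F '' D) := by
  have hS' : F '' D = S := by rw [show D = F ⁻¹' S from Set.ext hD, Set.image_preimage_eq _ hF]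
  rw [hD, hS', hS.mem_boundaryOrthogonal_iff]

end IsLagrangian

theorem isLagrangian_graph (L : 𝒢₁ ≃ₗᵢ[𝕜] 𝒢₂) : IsLagrangian 𝕜 {g : 𝒢₁ × 𝒢₂ | L g.1 = g.2} := by
  ext g
  simp only [SetLike.mem_coe, mem_boundaryOrthogonal, Set.mem_ofPred_eq]
  constructor
  · refine fun h => ext_inner_right 𝕜 fun v => ?_
    rw [← h (L.symm v, v) (L.apply_symm_apply v), ← L.inner_map_map, L.apply_symm_apply]
  · intro h w hw
    rw [← h, ← hw, L.inner_map_map]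

theorem isLagrangian_image {X : Type*} {F : X → 𝒢₁ × 𝒢₂} (hF : Function.Surjective F)
    {D : Set X} (hD : ∀ p, p ∈ D ↔ F p ∈ boundaryOrthogonal 𝕜 (F '' D)) :
    IsLagrangian 𝕜 (F '' D) := by
  have hpre : D = F ⁻¹' boundaryOrthogonal 𝕜 (F '' D) := Set.ext hD
  unfold IsLagrangian
  conv_rhs => rw [hpre]
  rw [Set.image_preimage_eq _ hF]

end Lagrangian

namespace LinearPMap

variable {𝕜 E : Type*} [RCLike 𝕜] [NormedAddCommGroup E] [InnerProductSpace 𝕜 E]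
  [CompleteSpace E]

theorem eq_neg_adjoint_iff {H : E →ₗ.[𝕜] E} (hH : Dense (H.domain : Set E)) :
    H = -H.adjoint ↔ (∀ x z : H.domain, ⟪(x : E), H z⟫_𝕜 + ⟪H x, (z : E)⟫_𝕜 = 0) ∧
      H.adjoint.domain ≤ H.domain := by
  constructor
  · intro h
    refine ⟨fun x z => ?_, h.ge.1⟩
    have hx : H x = -H.adjoint ⟨x, h.le.1 x.2⟩ := by
      rw [← neg_apply]
      exact h.le.2 rfl
    rw [hx, inner_neg_left, adjoint_isFormalAdjoint hH, add_neg_cancel]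
  · rintro ⟨hskew, hdom⟩
    have hadj : -H ≤ H.adjoint := IsFormalAdjoint.le_adjoint hH fun x z => by
      rw [neg_apply, inner_neg_right, eq_neg_iff_add_eq_zero, add_comm, hskew]
    refine eq_of_le_of_domain_eq ⟨hadj.1, fun x y hxy => ?_⟩ (le_antisymm hadj.1 hdom)
    rw [neg_apply, ← hadj.2 hxy, neg_apply, neg_neg]

theorem adjoint_apply_of_le_neg_adjoint {H₀ : E →ₗ.[𝕜] E} (hskew : H₀ ≤ -H₀.adjoint)
    (x : H₀.domain) : H₀.adjoint ⟨x, hskew.1 x.2⟩ = -H₀ x := by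
  rw [hskew.2 (y := ⟨x, hskew.1 x.2⟩) rfl, neg_apply, neg_neg]

end LinearPMap

section BoundarySystem

variable {ℋ 𝒢₁ 𝒢₂ : Type*} [NormedAddCommGroup ℋ] [InnerProductSpace ℂ ℋ] [CompleteSpace ℋ]
  [NormedAddCommGroup 𝒢₁] [InnerProductSpace ℂ 𝒢₁] [NormedAddCommGroup 𝒢₂]
  [InnerProductSpace ℂ 𝒢₂]

structure IsBoundarySystem (H₀ : ℋ →ₗ.[ℂ] ℋ) (F : H₀.adjoint.domain → 𝒢₁ × 𝒢₂) : Prop where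
  surjective : Function.Surjective F
  inner_add_inner : ∀ x y : H₀.adjoint.domain,
    ⟪(x : ℋ), H₀.adjoint y⟫_ℂ + ⟪H₀.adjoint x, (y : ℋ)⟫_ℂ
      = ⟪(F x).1, (F y).1⟫_ℂ - ⟪(F x).2, (F y).2⟫_ℂ

namespace IsBoundarySystem

variable {H₀ H : ℋ →ₗ.[ℂ] ℋ} {F : H₀.adjoint.domain → 𝒢₁ × 𝒢₂}

theorem apply_eq_zero (hF : IsBoundarySystem H₀ F) (hdense : Dense (H₀.domain : Set ℋ))
    (hskew : H₀ ≤ -H₀.adjoint) (x : H₀.domain) : F ⟨x, hskew.1 x.2⟩ = 0 := by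
  rw [← Submodule.mem_bot ℂ, ← boundaryOrthogonal_univ ℂ]
  intro w _
  obtain ⟨y, rfl⟩ := hF.surjective w
  have h := hF.inner_add_inner ⟨x, hskew.1 x.2⟩ y
  rw [LinearPMap.adjoint_apply_of_le_neg_adjoint hskew, inner_neg_left, ← inner_conj_symm,
    LinearPMap.adjoint_isFormalAdjoint hdense y x, inner_conj_symm, add_neg_cancel] at h
  exact sub_eq_zero.1 h.symm

theorem mem_adjoint_domain (hF : IsBoundarySystem H₀ F) (hres : H ≤ H₀.adjoint)
    {p : H₀.adjoint.domain} (hp : F p ∈ boundaryOrthogonal ℂ (F '' {z | (z : ℋ) ∈ H.domain})) :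
    (p : ℋ) ∈ H.adjoint.domain := by
  refine LinearPMap.mem_adjoint_domain_of_exists _ ⟨-H₀.adjoint p, fun z => ?_⟩
  have h := hF.inner_add_inner p ⟨z, hres.1 z.2⟩
  rw [hp _ ⟨_, z.2, rfl⟩, sub_self, ← hres.2 rfl] at h
  rw [inner_neg_left]
  linear_combination -h

theorem exists_mem_boundaryOrthogonal_of_mem_adjoint_domain (hF : IsBoundarySystem H₀ F)
    (hdense : Dense (H₀.domain : Set ℋ)) (hskew : H₀ ≤ -H₀.adjoint) (hres : H ≤ H₀.adjoint)
    (hH₀ : H₀.domain ≤ H.domain) (y : H.adjoint.domain) :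
    ∃ hy : (y : ℋ) ∈ H₀.adjoint.domain,
      F ⟨y, hy⟩ ∈ boundaryOrthogonal ℂ (F '' {z | (z : ℋ) ∈ H.domain}) := by
  have hHdense : Dense (H.domain : Set ℋ) := hdense.mono hH₀
  have hH (x : H₀.domain) : H ⟨x, hH₀ x.2⟩ = -H₀ x := by
    rw [hres.2 (y := ⟨x, hskew.1 x.2⟩) rfl, LinearPMap.adjoint_apply_of_le_neg_adjoint hskew]
  have hw (x : H₀.domain) : ⟪-H.adjoint y, (x : ℋ)⟫_ℂ = ⟪(y : ℋ), H₀ x⟫_ℂ := by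
    rw [inner_neg_left, LinearPMap.adjoint_isFormalAdjoint hHdense y ⟨x, hH₀ x.2⟩, hH x,
      inner_neg_right, neg_neg]
  have hy : (y : ℋ) ∈ H₀.adjoint.domain := LinearPMap.mem_adjoint_domain_of_exists _ ⟨_, hw⟩
  have hTy : H₀.adjoint ⟨y, hy⟩ = -H.adjoint y := LinearPMap.adjoint_apply_eq hdense _ hw
  refine ⟨hy, ?_⟩
  rintro _ ⟨z, hz, rfl⟩
  have h := hF.inner_add_inner ⟨y, hy⟩ z
  rw [hTy, ← hres.2 (x := ⟨z, hz⟩) rfl, inner_neg_left,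
    LinearPMap.adjoint_isFormalAdjoint hHdense y ⟨z, hz⟩, add_neg_cancel] at h
  exact sub_eq_zero.1 h.symm

theorem dense_and_eq_neg_adjoint_iff (hF : IsBoundarySystem H₀ F)
    (hdense : Dense (H₀.domain : Set ℋ)) (hskew : H₀ ≤ -H₀.adjoint) (hres : H ≤ H₀.adjoint) :
    (Dense (H.domain : Set ℋ) ∧ H = -H.adjoint) ↔ ∀ p : H₀.adjoint.domain,
      (p : ℋ) ∈ H.domain ↔ F p ∈ boundaryOrthogonal ℂ (F '' {z | (z : ℋ) ∈ H.domain}) := by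
  have hβ (p z : H₀.adjoint.domain) (hp : (p : ℋ) ∈ H.domain) (hz : (z : ℋ) ∈ H.domain) :
      ⟪(p : ℋ), H ⟨z, hz⟩⟫_ℂ + ⟪H ⟨p, hp⟩, (z : ℋ)⟫_ℂ
        = ⟪(F p).1, (F z).1⟫_ℂ - ⟪(F p).2, (F z).2⟫_ℂ := by
    rw [hres.2 (y := z) rfl, hres.2 (y := p) rfl]
    exact hF.inner_add_inner p z
  constructor
  · rintro ⟨hHdense, hH⟩ p
    obtain ⟨hskewH, hdom⟩ := (LinearPMap.eq_neg_adjoint_iff hHdense).1 hH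
    refine ⟨fun hp => ?_, fun hp => hdom (hF.mem_adjoint_domain hres hp)⟩
    rintro _ ⟨z, hz, rfl⟩
    exact sub_eq_zero.1 ((hβ p z hp hz).symm.trans (hskewH ⟨p, hp⟩ ⟨z, hz⟩))
  · intro hD
    have hH₀ : H₀.domain ≤ H.domain := fun x hx => by
      have h := (hD ⟨x, hskew.1 hx⟩).2
      rw [hF.apply_eq_zero hdense hskew ⟨x, hx⟩] at h
      exact h (zero_mem _)
    have hHdense : Dense (H.domain : Set ℋ) := hdense.mono hH₀
    refine ⟨hHdense, (LinearPMap.eq_neg_adjoint_iff hHdense).2 ⟨fun x z => ?_, fun y hy => ?_⟩⟩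
    · have hx := (hD ⟨x, hres.1 x.2⟩).1 x.2 _ ⟨⟨z, hres.1 z.2⟩, z.2, rfl⟩
      rw [← sub_eq_zero] at hx
      exact (hβ ⟨x, hres.1 x.2⟩ ⟨z, hres.1 z.2⟩ x.2 z.2).trans hx
    · obtain ⟨hy', hFy⟩ :=
        hF.exists_mem_boundaryOrthogonal_of_mem_adjoint_domain hdense hskew hres hH₀ ⟨y, hy⟩
      exact (hD ⟨y, hy'⟩).2 hFy

end IsBoundarySystem

end BoundarySystem

theorem stmt_13_general {ℋ 𝒢₁ 𝒢₂ : Type*}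
    [NormedAddCommGroup ℋ] [InnerProductSpace ℂ ℋ] [CompleteSpace ℋ]
    [NormedAddCommGroup 𝒢₁] [InnerProductSpace ℂ 𝒢₁] [CompleteSpace 𝒢₁]
    [NormedAddCommGroup 𝒢₂] [InnerProductSpace ℂ 𝒢₂] [CompleteSpace 𝒢₂]
    (H₀ : ℋ →ₗ.[ℂ] ℋ)
    (hdense : Dense (H₀.domain : Set ℋ))
    (hskew : H₀ ≤ -H₀.adjoint)
    -- `(𝒢₁, 𝒢₂, F)` is a boundary system for `H₀`:
    (F : H₀.adjoint.domain → 𝒢₁ × 𝒢₂)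
    (hFsurj : Function.Surjective F)
    (hFsys : ∀ x y : H₀.adjoint.domain,
      ⟪(x : ℋ), H₀.adjoint y⟫_ℂ + ⟪H₀.adjoint x, (y : ℋ)⟫_ℂ
        = ⟪(F x).1, (F y).1⟫_ℂ - ⟪(F x).2, (F y).2⟫_ℂ)
    -- a restriction `H ⊆ H₀*`:
    (H : ℋ →ₗ.[ℂ] ℋ) (hres : H ≤ H₀.adjoint) :
    (Dense (H.domain : Set ℋ) ∧ H = -H.adjoint) ↔
      ∃ L : 𝒢₁ ≃ₗᵢ[ℂ] 𝒢₂,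
        (H.domain : Set ℋ) = {x : ℋ | ∃ hx : x ∈ H₀.adjoint.domain,
            L ((F (⟨x, hx⟩ : H₀.adjoint.domain)).1) = (F (⟨x, hx⟩ : H₀.adjoint.domain)).2} ∧
          ∀ x : H.domain, ∃ hx : (x : ℋ) ∈ H₀.adjoint.domain,
            H x = H₀.adjoint (⟨(x : ℋ), hx⟩ : H₀.adjoint.domain) := by
  have hF : IsBoundarySystem H₀ F := ⟨hFsurj, hFsys⟩
  rw [hF.dense_and_eq_neg_adjoint_iff hdense hskew hres]
  constructor
  · intro hD
    have hS := isLagrangian_image (D := {z | (z : ℋ) ∈ H.domain}) hFsurj hD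
    obtain ⟨L, hL⟩ := hS.exists_linearIsometryEquiv
    refine ⟨L, Set.ext fun x => ⟨fun hx => ⟨hres.1 hx, (hL _).1 ⟨⟨x, hres.1 hx⟩, hx, rfl⟩⟩, ?_⟩,
      fun x => ⟨hres.1 x.2, hres.2 rfl⟩⟩
    rintro ⟨hx, hLx⟩
    exact (hD ⟨x, hx⟩).2 (hS.mem_boundaryOrthogonal_iff.2 ((hL _).2 hLx))
  · rintro ⟨L, hdom, -⟩
    refine (isLagrangian_graph L).mem_iff_mem_boundaryOrthogonal_image hFsurj
      (D := {z | (z : ℋ) ∈ H.domain}) fun p => ?_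
    simpa using Set.ext_iff.1 hdom p

/-- **Theorem A.** Let `(𝒢₁, 𝒢₂, F)` be a boundary system for the
skew-symmetric operator `H₀` with the standard symmetric and unitary forms. An operator
`H ⊆ H₀*` is skew-self-adjoint iff there is a unitary `L : 𝒢₁ → 𝒢₂` with
`D(H) = {x ∈ D(H₀*) : L F₁x = F₂x}` (and `Hx = H₀*x` on `D(H)`). -/
theorem stmt_13 {ℋ 𝒢₁ 𝒢₂ : Type*}
    [NormedAddCommGroup ℋ] [InnerProductSpace ℂ ℋ] [CompleteSpace ℋ]
    [NormedAddCommGroup 𝒢₁] [InnerProductSpace ℂ 𝒢₁] [CompleteSpace 𝒢₁]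
    [NormedAddCommGroup 𝒢₂] [InnerProductSpace ℂ 𝒢₂] [CompleteSpace 𝒢₂]
    (H₀ : ℋ →ₗ.[ℂ] ℋ)
    (hdense : Dense (H₀.domain : Set ℋ)) (hclosed : H₀.IsClosed)
    (hskew : H₀ ≤ -H₀.adjoint)
    -- `(𝒢₁, 𝒢₂, F)` is a boundary system for `H₀`:
    (F : H₀.adjoint.domain → 𝒢₁ × 𝒢₂)
    (hFsurj : Function.Surjective F)
    (hFsys : ∀ x y : H₀.adjoint.domain,
      ⟪(x : ℋ), H₀.adjoint y⟫_ℂ + ⟪H₀.adjoint x, (y : ℋ)⟫_ℂ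
        = ⟪(F x).1, (F y).1⟫_ℂ - ⟪(F x).2, (F y).2⟫_ℂ)
    -- a restriction `H ⊆ H₀*`:
    (H : ℋ →ₗ.[ℂ] ℋ) (hres : H ≤ H₀.adjoint) :
    (Dense (H.domain : Set ℋ) ∧ H = -H.adjoint) ↔
      ∃ L : 𝒢₁ ≃ₗᵢ[ℂ] 𝒢₂,
        (H.domain : Set ℋ) = {x : ℋ | ∃ hx : x ∈ H₀.adjoint.domain,
            L ((F (⟨x, hx⟩ : H₀.adjoint.domain)).1) = (F (⟨x, hx⟩ : H₀.adjoint.domain)).2} ∧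
          ∀ x : H.domain, ∃ hx : (x : ℋ) ∈ H₀.adjoint.domain,
            H x = H₀.adjoint (⟨(x : ℋ), hx⟩ : H₀.adjoint.domain) :=
  stmt_13_general H₀ hdense hskew F hFsurj hFsys H hres
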